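/- arXiv:2306.03697 — 6 statements merged into one kernel-verified Lean document; each statement's English description precedes it below -/
import Mathlib

section
/- For any integral lattice L ⊂ ℝ^n and any positive integer k, the set of lattice vectors y ∈ L with ‖y‖² = k is finite and has cardinality at most 2 · binomial(n + 2k − 2, 2k − 1). -/
/-!
For `y` on the sphere `‖y‖² = k`, the polynomial
`P_y(x) = ⟪y, x⟫ ∏_{s=1}^{k-1} (k ⟪y, x⟫² - s² ‖x‖²)` is homogeneous of degree `2k - 1`, does not
vanish at `y`, and vanishes at every other lattice point `x` of the sphere with `x ≠ -y`: there
`⟪y, x⟫` is an integer of absolute value `< k`. Choosing one vector from each antipodal pair, the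
polynomials `P_y` are therefore linearly independent in the space of homogeneous polynomials of
degree `2k - 1` in `n` variables, whose dimension is `binomial(n + 2k - 2, 2k - 1)`.
-/

open MvPolynomial Finset
open scoped Pointwise

theorem MvPolynomial.finrank_homogeneousSubmodule {σ R : Type*} [Fintype σ] [CommRing R]
    [StrongRankCondition R] (d : ℕ) :
    Module.finrank R (homogeneousSubmodule σ R d) = (Fintype.card σ + d - 1).choose d := by
  classical
  have hdeg : {m : σ →₀ ℕ | m.degree = d} = ((univ : Finset σ).finsuppAntidiag d : Set _) := by
    ext m; simp [Finsupp.degree_eq_sum]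
  rw [homogeneousSubmodule_eq_finsupp_supported, hdeg,
    (AddMonoidAlgebra.supportedEquivFinsupp _).finrank_eq, Module.finrank_finsupp_self]
  simp [card_finsuppAntidiag_nat_eq_choose]

theorem LinearIndependent.of_dual_triangular {ι R M : Type*} [CommRing R] [NoZeroDivisors R]
    [AddCommGroup M] [Module R M] (v : ι → M) (φ : ι → M →ₗ[R] R)
    (hdiag : ∀ i, φ i (v i) ≠ 0) (hoff : ∀ i j, i ≠ j → φ i (v j) = 0) :
    LinearIndependent R v := by
  classical
  refine linearIndependent_iff'.2 fun s c hsum i hi => ?_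
  have h := congrArg (φ i) hsum
  simp only [map_sum, map_smul, smul_eq_mul, map_zero] at h
  rw [sum_eq_single i (fun j _ hji => by rw [hoff i j hji.symm, mul_zero])
    (fun h => absurd hi h)] at h
  exact (mul_eq_zero.1 h).resolve_right (hdiag i)

theorem Set.finite_and_ncard_le_of_cardinalMk_le {α : Type*} {T : Set α} {N : ℕ}
    (h : Cardinal.mk T ≤ N) : T.Finite ∧ T.ncard ≤ N := by
  have hN := Cardinal.natCast_lt_aleph0 (n := N)
  refine ⟨Cardinal.lt_aleph0_iff_set_finite.1 (h.trans_lt hN), ?_⟩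
  simpa [← Nat.card_coe_set_eq, Nat.card] using Cardinal.toNat_le_toNat h hN

theorem Set.exists_antipodalFree_subset_union_neg {G : Type*} [InvolutiveNeg G] (S : Set G)
    (hS : ∀ y ∈ S, y ≠ -y) :
    ∃ T ⊆ S, (∀ x ∈ T, ∀ y ∈ T, x ≠ -y) ∧ S ⊆ T ∪ -T := by
  let r := @WellOrderingRel G
  refine ⟨{y ∈ S | -y ∈ S → r (-y) y}, fun y hy => hy.1, ?_, fun y hy => ?_⟩
  · rintro x ⟨hxS, hx⟩ y ⟨hyS, hy⟩ rfl
    exact asymm (hy hxS) (by simpa using hx (by simpa using hyS))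
  · rcases trichotomous_of r (-y) y with h | h | h
    · exact Or.inl ⟨hy, fun _ => h⟩
    · exact absurd h.symm (hS y hy)
    · by_cases hneg : -y ∈ S
      · exact Or.inr ⟨hneg, fun _ => by simpa using h⟩
      · exact Or.inl ⟨hy, fun h' => absurd h' hneg⟩

theorem Set.finite_and_ncard_le_two_mul {G : Type*} [InvolutiveNeg G] {S : Set G} {N : ℕ}
    (hS : ∀ y ∈ S, y ≠ -y)
    (hN : ∀ T ⊆ S, (∀ x ∈ T, ∀ y ∈ T, x ≠ -y) → T.Finite ∧ T.ncard ≤ N) :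
    S.Finite ∧ S.ncard ≤ 2 * N := by
  obtain ⟨T, hTS, hT, hST⟩ := S.exists_antipodalFree_subset_union_neg hS
  obtain ⟨hTfin, hTcard⟩ := hN T hTS hT
  have hfin : (T ∪ -T).Finite := hTfin.union hTfin.neg
  refine ⟨hfin.subset hST, ?_⟩
  calc S.ncard ≤ (T ∪ -T).ncard := ncard_le_ncard hST hfin
    _ ≤ T.ncard + (-T).ncard := ncard_union_le _ _
    _ ≤ 2 * N := by rw [ncard_neg]; omega

theorem abs_real_inner_lt_of_norm_sq_eq {F : Type*} [NormedAddCommGroup F]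
    [InnerProductSpace ℝ F] {x y : F} {c : ℝ} (hx : ‖x‖ ^ 2 = c) (hy : ‖y‖ ^ 2 = c)
    (hxy : x ≠ y) (hxy' : x ≠ -y) : |inner ℝ x y| < c := by
  have hle : |inner ℝ x y| ≤ c := by
    have := abs_real_inner_le_norm x y
    nlinarith [norm_nonneg x, norm_nonneg y, sq_nonneg (‖x‖ - ‖y‖)]
  have hne : inner ℝ x y ≠ c := fun h => hxy <| sub_eq_zero.1 <| norm_eq_zero.1 <|
    pow_eq_zero_iff two_ne_zero |>.1 <| by rw [norm_sub_sq_real, hx, hy, h]; ring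
  have hne' : inner ℝ x y ≠ -c := fun h => hxy' <| eq_neg_of_add_eq_zero_left <|
    norm_eq_zero.1 <| pow_eq_zero_iff two_ne_zero |>.1 <| by
      rw [norm_add_sq_real, hx, hy, h]; ring
  obtain ⟨h1, h2⟩ := abs_le.1 hle
  exact abs_lt.2 ⟨lt_of_le_of_ne h1 hne'.symm, lt_of_le_of_ne h2 hne⟩

namespace EuclideanSpace

variable {ι : Type*} [Fintype ι]

noncomputable def innerPoly (y : EuclideanSpace ℝ ι) : MvPolynomial ι ℝ := ∑ i, C (y i) * X i

noncomputable def normSqPoly : MvPolynomial ι ℝ := ∑ i, X i ^ 2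

noncomputable def sphereSeparatingPoly (k : ℕ) (y : EuclideanSpace ℝ ι) : MvPolynomial ι ℝ :=
  innerPoly y * ∏ s ∈ Icc 1 (k - 1), (C (k : ℝ) * innerPoly y ^ 2 - C ((s : ℝ) ^ 2) * normSqPoly)

theorem isHomogeneous_innerPoly (y : EuclideanSpace ℝ ι) : (innerPoly y).IsHomogeneous 1 :=
  IsHomogeneous.sum _ _ _ fun i _ => isHomogeneous_C_mul_X (y i) i

theorem isHomogeneous_normSqPoly : (normSqPoly : MvPolynomial ι ℝ).IsHomogeneous 2 :=
  IsHomogeneous.sum _ _ _ fun i _ => isHomogeneous_X_pow i 2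

theorem isHomogeneous_sphereSeparatingPoly {k : ℕ} (hk : 0 < k) (y : EuclideanSpace ℝ ι) :
    (sphereSeparatingPoly k y).IsHomogeneous (2 * k - 1) := by
  have hfactor (s : ℕ) :
      (C (k : ℝ) * innerPoly y ^ 2 - C ((s : ℝ) ^ 2) * normSqPoly).IsHomogeneous 2 :=
    (((isHomogeneous_innerPoly y).pow 2).C_mul _).sub (isHomogeneous_normSqPoly.C_mul _)
  have hdeg : 1 + ∑ _s ∈ Icc 1 (k - 1), 2 = 2 * k - 1 := by simp; omega
  exact hdeg ▸ (isHomogeneous_innerPoly y).mul (IsHomogeneous.prod _ _ _ fun s _ => hfactor s)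

theorem eval_innerPoly (y x : EuclideanSpace ℝ ι) : eval x (innerPoly y) = inner ℝ y x := by
  simp [innerPoly, PiLp.inner_apply, mul_comm]

theorem eval_normSqPoly (x : EuclideanSpace ℝ ι) : eval x normSqPoly = ‖x‖ ^ 2 := by
  simp [normSqPoly, EuclideanSpace.norm_sq_eq]

theorem eval_sphereSeparatingPoly (k : ℕ) (y x : EuclideanSpace ℝ ι) :
    eval x (sphereSeparatingPoly k y) =
      inner ℝ y x * ∏ s ∈ Icc 1 (k - 1), (k * inner ℝ y x ^ 2 - (s : ℝ) ^ 2 * ‖x‖ ^ 2) := by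
  simp [sphereSeparatingPoly, eval_innerPoly, eval_normSqPoly]

theorem eval_sphereSeparatingPoly_eq_zero {k : ℕ} {y x : EuclideanSpace ℝ ι} (hx : ‖x‖ ^ 2 = k)
    {m : ℤ} (hm : inner ℝ y x = m) (hmk : |m| < k) : eval x (sphereSeparatingPoly k y) = 0 := by
  rw [eval_sphereSeparatingPoly, hm, hx]
  obtain rfl | hm0 := eq_or_ne m 0
  · simp
  · have hmem : m.natAbs ∈ Icc 1 (k - 1) := by
      rw [Int.abs_eq_natAbs] at hmk; rw [mem_Icc]; omega
    refine mul_eq_zero_of_right _ (prod_eq_zero hmem ?_)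
    rw [Nat.cast_natAbs, Int.cast_abs, sq_abs]
    ring

theorem eval_sphereSeparatingPoly_self_ne_zero {k : ℕ} (hk : 0 < k) {y : EuclideanSpace ℝ ι}
    (hy : ‖y‖ ^ 2 = k) : eval y (sphereSeparatingPoly k y) ≠ 0 := by
  rw [eval_sphereSeparatingPoly, real_inner_self_eq_norm_sq, hy]
  refine mul_ne_zero (by positivity) (prod_ne_zero_iff.2 fun s hs => ?_)
  have hsk : (s : ℝ) < k := by
    rw [mem_Icc] at hs; exact_mod_cast (by omega : s < k)
  have : (s : ℝ) ^ 2 < k ^ 2 := by gcongr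
  nlinarith

theorem linearIndependent_sphereSeparatingPoly {k : ℕ} (hk : 0 < k) {T : Set (EuclideanSpace ℝ ι)}
    (hnorm : ∀ y ∈ T, ‖y‖ ^ 2 = k) (hint : ∀ x ∈ T, ∀ y ∈ T, ∃ m : ℤ, inner ℝ x y = m)
    (hanti : ∀ x ∈ T, ∀ y ∈ T, x ≠ -y) :
    LinearIndependent ℝ fun y : T => sphereSeparatingPoly k (y : EuclideanSpace ℝ ι) := by
  refine .of_dual_triangular _ (fun x : T => (aeval (x : EuclideanSpace ℝ ι)).toLinearMap)
    (fun x => by simpa using eval_sphereSeparatingPoly_self_ne_zero hk (hnorm x x.2))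
    fun x y hxy => ?_
  obtain ⟨m, hm⟩ := hint y y.2 x x.2
  have hmk := abs_real_inner_lt_of_norm_sq_eq (hnorm y y.2) (hnorm x x.2)
    (fun h => hxy (Subtype.ext h.symm)) (hanti y y.2 x x.2)
  rw [hm] at hmk
  simpa using eval_sphereSeparatingPoly_eq_zero (hnorm x x.2) hm (by exact_mod_cast hmk)

theorem finite_and_ncard_le_of_integral_sphere {k : ℕ} (hk : 0 < k)
    {T : Set (EuclideanSpace ℝ ι)} (hnorm : ∀ y ∈ T, ‖y‖ ^ 2 = k)
    (hint : ∀ x ∈ T, ∀ y ∈ T, ∃ m : ℤ, inner ℝ x y = m) (hanti : ∀ x ∈ T, ∀ y ∈ T, x ≠ -y) :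
    T.Finite ∧ T.ncard ≤ (Fintype.card ι + 2 * k - 2).choose (2 * k - 1) := by
  let v (y : T) : homogeneousSubmodule ι ℝ (2 * k - 1) :=
    ⟨sphereSeparatingPoly k y, isHomogeneous_sphereSeparatingPoly hk (y : EuclideanSpace ℝ ι)⟩
  have hv : LinearIndependent ℝ v :=
    .of_comp (Submodule.subtype _) (linearIndependent_sphereSeparatingPoly hk hnorm hint hanti)
  have : Module.Finite ℝ (homogeneousSubmodule ι ℝ (2 * k - 1)) :=
    Module.Finite.iff_fg.2 (homogeneousSubmodule_fg _ _ _)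
  have hcard := hv.cardinalMk_le_finrank
  rw [finrank_homogeneousSubmodule,
    show Fintype.card ι + (2 * k - 1) - 1 = Fintype.card ι + 2 * k - 2 by omega] at hcard
  exact Set.finite_and_ncard_le_of_cardinalMk_le hcard

end EuclideanSpace

theorem integral_lattice_sphere_count_general (n k : ℕ) (hk : 0 < k)
    (L : AddSubgroup (EuclideanSpace ℝ (Fin n)))
    (hint : ∀ x ∈ L, ∀ y ∈ L, ∃ m : ℤ, (inner ℝ x y : ℝ) = (m : ℝ)) :
    {y : EuclideanSpace ℝ (Fin n) | y ∈ L ∧ ‖y‖ ^ 2 = (k : ℝ)}.Finite ∧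
      {y : EuclideanSpace ℝ (Fin n) | y ∈ L ∧ ‖y‖ ^ 2 = (k : ℝ)}.ncard ≤
        2 * Nat.choose (n + 2 * k - 2) (2 * k - 1) := by
  refine Set.finite_and_ncard_le_two_mul (fun y hy hneg => ?_) fun T hTS hT => ?_
  · have h2y : (2 : ℝ) • y = 0 := by rw [two_smul]; nth_rw 1 [hneg]; exact neg_add_cancel y
    have hnorm := hy.2
    rw [(smul_eq_zero.1 h2y).resolve_left two_ne_zero, norm_zero] at hnorm
    norm_num at hnorm
    exact hk.ne (by exact_mod_cast hnorm)
  · simpa using EuclideanSpace.finite_and_ncard_le_of_integral_sphere hk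
      (fun y hy => (hTS hy).2) (fun x hx y hy => hint x (hTS hx).1 y (hTS hy).1) hT

/-- **Reverse Minkowski for integral lattices, sphere version.**
For any integral lattice `L ⊂ ℝ^n` (a discrete additive subgroup all of whose pairwise
inner products are integers) and any positive integer `k`, the set of lattice vectors of
squared norm exactly `k` is finite, of cardinality at most `2 * (n + 2k - 2).choose (2k - 1)`. -/
theorem integral_lattice_sphere_count (n k : ℕ) (hk : 0 < k)
    (L : AddSubgroup (EuclideanSpace ℝ (Fin n)))
    (hdisc : DiscreteTopology L)
    (hint : ∀ x ∈ L, ∀ y ∈ L, ∃ m : ℤ, (inner ℝ x y : ℝ) = (m : ℝ)) :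
    {y : EuclideanSpace ℝ (Fin n) | y ∈ L ∧ ‖y‖ ^ 2 = (k : ℝ)}.Finite ∧
      {y : EuclideanSpace ℝ (Fin n) | y ∈ L ∧ ‖y‖ ^ 2 = (k : ℝ)}.ncard ≤
        2 * Nat.choose (n + 2 * k - 2) (2 * k - 1) :=
  integral_lattice_sphere_count_general n k hk L hint
end

section
/- For any integral lattice L ⊂ ℝ^n and any positive integer k, the set of lattice vectors y ∈ L with ‖y‖² ≤ k is finite and has cardinality at most 2 · binomial(n + 2k − 1, 2k − 1) − 1. -/
/-!
Choose one vector from each pair `±y` of the lattice vectors with `‖y‖² ≤ k` (and `0`), and order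
the chosen vectors by `‖y‖²`. For a chosen `y` with `‖y‖² = a`, the polynomial
`x ↦ ∏_{1 - k ≤ j < a} (⟪y, x⟫ - j)` has degree `a + k - 1 ≤ 2k - 1`, does not vanish at `y`, and
vanishes at every other chosen `z` with `‖z‖² ≤ a`: integrality and `‖y ± z‖² ≥ 1` force
`1 - k ≤ ⟪y, z⟫ < a`. These polynomials are therefore linearly independent in the space of
polynomials of degree `≤ 2k - 1` in `n` variables, of dimension `(n + 2k - 1).choose (2k - 1)`.
The ball holds at most twice as many vectors, `0` counted once.
-/

open MvPolynomial Pointwise RealInnerProductSpace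

theorem Finsupp.natCard_sum_le_le_choose (n d : ℕ) :
    Nat.card {s : Fin n →₀ ℕ // (s.sum fun _ e => e) ≤ d} ≤ (n + d).choose d := by
  let pad (s : {s : Fin n →₀ ℕ // (s.sum fun _ e => e) ≤ d}) :
      {P : Fin (n + 1) →₀ ℕ // P.sum (fun _ => id) = d} :=
    ⟨Finsupp.cons (d - s.1.sum fun _ e => e) s.1, by
      change (Finsupp.cons _ s.1).sum (fun _ e => e) = d
      rw [Finsupp.sum_cons]
      have := s.2
      omega⟩
  have hpad : Function.Injective pad := fun s t h =>
    Subtype.ext (Finsupp.cons_injective2 (congrArg Subtype.val h)).2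
  calc _ ≤ Nat.card (Sym (Fin (n + 1)) d) :=
        Nat.card_le_card_of_injective _ ((Sym.equivNatSum _ d).symm.injective.comp hpad)
    _ = (n + d).choose d := by rw [Sym.natCard_sym_eq_choose]; simp

theorem MvPolynomial.finrank_restrictTotalDegree_le (R : Type*) [CommRing R]
    [StrongRankCondition R] (n d : ℕ) :
    Module.finrank R (restrictTotalDegree (Fin n) R d) ≤ (n + d).choose d := by
  rw [restrictTotalDegree, Module.finrank_eq_nat_card_basis (basisRestrictSupport R _)]
  exact Finsupp.natCard_sum_le_le_choose n d

theorem linearIndependent_of_triangular {ι K M α : Type*} [CommRing K] [NoZeroDivisors K]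
    [AddCommGroup M] [Module K M] [LinearOrder α] (v : ι → M) (φ : ι → Module.Dual K M)
    (r : ι → α) (hdiag : ∀ i, φ i (v i) ≠ 0) (hoff : ∀ i j, i ≠ j → r i ≤ r j → φ i (v j) = 0) :
    LinearIndependent K v := by
  classical
  rw [linearIndependent_iff']
  intro s g hsum i hi
  by_contra hgi
  obtain ⟨i₀, hi₀, hmin⟩ :=
    (s.filter (g · ≠ 0)).exists_min_image r ⟨i, Finset.mem_filter.mpr ⟨hi, hgi⟩⟩
  obtain ⟨hi₀s, hgi₀⟩ := Finset.mem_filter.mp hi₀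
  have hφ := congrArg (φ i₀) hsum
  rw [map_sum, map_zero, Finset.sum_eq_single_of_mem i₀ hi₀s fun j hj hji => ?_] at hφ
  · simp only [map_smul, smul_eq_mul, mul_eq_zero] at hφ
    exact hφ.elim hgi₀ (hdiag i₀)
  · by_cases hgj : g j = 0
    · simp [hgj]
    · simp [hoff i₀ j (Ne.symm hji) (hmin j (Finset.mem_filter.mpr ⟨hj, hgj⟩))]

theorem Set.exists_union_neg_eq_and_inter_neg_eq_singleton_zero {G : Type*} [AddGroup G]
    [IsAddTorsionFree G] (S : Set G) (hS : -S = S) (h0 : 0 ∈ S) :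
    ∃ R ⊆ S, R ∪ -R = S ∧ R ∩ -R = {0} := by
  let r : G → G → Prop := WellOrderingRel
  refine ⟨{y ∈ S | ¬ r (-y) y}, Set.sep_subset _ _, ?_, ?_⟩
  · refine subset_antisymm (Set.union_subset (Set.sep_subset _ _) ?_) fun y hy => ?_
    · exact (Set.neg_subset_neg.mpr (Set.sep_subset _ _)).trans hS.subset
    · by_cases hry : r (-y) y
      · refine Or.inr ⟨Set.mem_neg.mp (hS.symm ▸ hy), ?_⟩
        rw [neg_neg]
        exact asymm hry
      · exact Or.inl ⟨hy, hry⟩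
  · ext y
    simp only [Set.mem_inter_iff, Set.mem_neg, Set.mem_ofPred_eq, neg_neg, Set.mem_singleton_iff]
    constructor
    · rintro ⟨⟨-, hy⟩, -, hny⟩
      exact neg_eq_self.mp ((trichotomous_of r (-y) y).resolve_left hy |>.resolve_right hny)
    · rintro rfl
      simpa using ⟨h0, irrefl 0⟩

theorem Set.ncard_union_neg_add_one {G : Type*} [AddGroup G] {R : Set G} (hR : R.Finite)
    (h : R ∩ -R = {0}) : (R ∪ -R).ncard + 1 = 2 * R.ncard := by
  have := Set.ncard_union_add_ncard_inter R (-R) hR hR.neg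
  rwa [h, Set.ncard_singleton, Set.ncard_neg, ← two_mul] at this

theorem one_le_norm_sq_of_inner_self_eq_int {E : Type*} [NormedAddCommGroup E]
    [InnerProductSpace ℝ E] {y : E} {m : ℤ} (hm : ⟪y, y⟫ = m) (hy : y ≠ 0) : 1 ≤ ‖y‖ ^ 2 := by
  have hpos : (0 : ℝ) < m := hm ▸ real_inner_self_pos.mpr hy
  rw [← real_inner_self_eq_norm_sq, hm]
  exact_mod_cast Int.cast_pos.mp hpos

theorem inner_mem_Ico_of_one_le_norm_sub_sq {E : Type*} [NormedAddCommGroup E]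
    [InnerProductSpace ℝ E] {y z : E} {a b c : ℤ} {k : ℕ} (ha : ⟪y, y⟫ = a) (hb : ⟪y, z⟫ = b)
    (hc : ⟪z, z⟫ = c) (hak : a ≤ k) (hca : c ≤ a) (hsub : 1 ≤ ‖y - z‖ ^ 2)
    (hadd : 1 ≤ ‖y + z‖ ^ 2) : b ∈ Finset.Ico (1 - (k : ℤ)) a := by
  rw [← real_inner_self_eq_norm_sq, real_inner_sub_sub_self, ha, hb, hc] at hsub
  rw [← real_inner_self_eq_norm_sq, real_inner_add_add_self, ha, hb, hc] at hadd
  have hsub' : 1 ≤ a - 2 * b + c := by exact_mod_cast hsub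
  have hadd' : 1 ≤ a + 2 * b + c := by exact_mod_cast hadd
  rw [Finset.mem_Ico]
  omega

section SeparatingPoly

variable {n : ℕ}

noncomputable def innerPoly (y : EuclideanSpace ℝ (Fin n)) : MvPolynomial (Fin n) ℝ :=
  ∑ i, C (y i) * X i

theorem eval_innerPoly (y x : EuclideanSpace ℝ (Fin n)) :
    eval (x : Fin n → ℝ) (innerPoly y) = ⟪y, x⟫ := by
  simp [innerPoly, PiLp.inner_apply, mul_comm]

theorem totalDegree_innerPoly_le (y : EuclideanSpace ℝ (Fin n)) :
    (innerPoly y).totalDegree ≤ 1 :=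
  (totalDegree_finsetSum _ _).trans <| Finset.sup_le fun i _ =>
    (totalDegree_mul _ _).trans (by simp [totalDegree_X])

noncomputable def separatingPoly (k : ℕ) (a : ℤ) (y : EuclideanSpace ℝ (Fin n)) :
    MvPolynomial (Fin n) ℝ :=
  ∏ j ∈ Finset.Ico (1 - (k : ℤ)) a, (innerPoly y - C (j : ℝ))

theorem eval_separatingPoly (k : ℕ) (a : ℤ) (y x : EuclideanSpace ℝ (Fin n)) :
    eval (x : Fin n → ℝ) (separatingPoly k a y) =
      ∏ j ∈ Finset.Ico (1 - (k : ℤ)) a, (⟪y, x⟫ - j) := by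
  simp [separatingPoly, eval_innerPoly]

theorem totalDegree_separatingPoly_le {k : ℕ} {a : ℤ} (hak : a ≤ k)
    (y : EuclideanSpace ℝ (Fin n)) : (separatingPoly k a y).totalDegree ≤ 2 * k - 1 := by
  refine (totalDegree_finsetProd _ _).trans <| (Finset.sum_le_card_nsmul _ _ 1 fun j _ =>
    (totalDegree_sub_C_le _ _).trans (totalDegree_innerPoly_le y)).trans ?_
  rw [Int.card_Ico, smul_eq_mul, mul_one]
  omega

theorem eval_separatingPoly_ne_zero {k : ℕ} {a : ℤ} {y x : EuclideanSpace ℝ (Fin n)}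
    (ha : ⟪y, x⟫ = a) : eval (x : Fin n → ℝ) (separatingPoly k a y) ≠ 0 := by
  rw [eval_separatingPoly, ha, Finset.prod_ne_zero_iff]
  intro j hj
  exact sub_ne_zero.mpr (Int.cast_injective.ne (Finset.mem_Ico.mp hj).2.ne')

theorem eval_separatingPoly_eq_zero {k : ℕ} {a b : ℤ} {y x : EuclideanSpace ℝ (Fin n)}
    (hb : ⟪y, x⟫ = b) (hba : b ∈ Finset.Ico (1 - (k : ℤ)) a) :
    eval (x : Fin n → ℝ) (separatingPoly k a y) = 0 := by
  rw [eval_separatingPoly]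
  exact Finset.prod_eq_zero hba (by rw [hb, sub_self])

theorem finite_and_ncard_le_choose_of_integral (k : ℕ) (T : Set (EuclideanSpace ℝ (Fin n)))
    (hnorm : ∀ y ∈ T, ‖y‖ ^ 2 ≤ k) (hint : ∀ y ∈ T, ∀ z ∈ T, ∃ m : ℤ, ⟪y, z⟫ = m)
    (hsub : ∀ y ∈ T, ∀ z ∈ T, y ≠ z → 1 ≤ ‖y - z‖ ^ 2)
    (hadd : ∀ y ∈ T, ∀ z ∈ T, y ≠ z → 1 ≤ ‖y + z‖ ^ 2) :
    T.Finite ∧ T.ncard ≤ (n + (2 * k - 1)).choose (2 * k - 1) := by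
  choose a ha using fun y : T => hint y y.2 y y.2
  have hak (y : T) : a y ≤ k := by
    have := hnorm y y.2
    rw [← real_inner_self_eq_norm_sq, ha] at this
    exact_mod_cast this
  let V := restrictTotalDegree (Fin n) ℝ (2 * k - 1)
  have hmem (y : T) : separatingPoly k (a y) y ∈ V :=
    (mem_restrictTotalDegree _ _ _).mpr (totalDegree_separatingPoly_le (hak y) _)
  let v (y : T) : V := ⟨separatingPoly k (a y) y, hmem y⟩
  let φ (z : T) : Module.Dual ℝ V := (aeval (z : Fin n → ℝ)).toLinearMap ∘ₗ V.subtype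
  have hφv (z y : T) : φ z (v y) = eval (z : Fin n → ℝ) (separatingPoly k (a y) y) := rfl
  have hv : LinearIndependent ℝ v := by
    refine linearIndependent_of_triangular v φ a (fun y => ?_) (fun z y hzy hle => ?_)
    · rw [hφv]
      exact eval_separatingPoly_ne_zero (ha y)
    · obtain ⟨b, hb⟩ := hint y y.2 z z.2
      have hyz : (y : EuclideanSpace ℝ (Fin n)) ≠ z := fun h => hzy (Subtype.ext h).symm
      rw [hφv]
      exact eval_separatingPoly_eq_zero hb <| inner_mem_Ico_of_one_le_norm_sub_sq
        (ha y) hb (ha z) (hak y) hle (hsub y y.2 z z.2 hyz) (hadd y y.2 z z.2 hyz)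
  have : Finite T := hv.finite
  have := Fintype.ofFinite T
  refine ⟨Set.toFinite T, ?_⟩
  calc T.ncard = Fintype.card T := by rw [← Nat.card_coe_set_eq, Nat.card_eq_fintype_card]
    _ ≤ Module.finrank ℝ V := hv.fintype_card_le_finrank
    _ ≤ _ := finrank_restrictTotalDegree_le ℝ n _

end SeparatingPoly

theorem integral_lattice_ball_count_general (n k : ℕ)
    (L : AddSubgroup (EuclideanSpace ℝ (Fin n)))
    (hint : ∀ x ∈ L, ∀ y ∈ L, ∃ m : ℤ, (inner ℝ x y : ℝ) = (m : ℝ)) :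
    {y : EuclideanSpace ℝ (Fin n) | y ∈ L ∧ ‖y‖ ^ 2 ≤ (k : ℝ)}.Finite ∧
      {y : EuclideanSpace ℝ (Fin n) | y ∈ L ∧ ‖y‖ ^ 2 ≤ (k : ℝ)}.ncard ≤
        2 * Nat.choose (n + 2 * k - 1) (2 * k - 1) - 1 := by
  set S := {y : EuclideanSpace ℝ (Fin n) | y ∈ L ∧ ‖y‖ ^ 2 ≤ (k : ℝ)}
  have : IsAddTorsionFree (EuclideanSpace ℝ (Fin n)) := .of_module_rat _
  obtain ⟨R, hRS, hRS', hR0⟩ := S.exists_union_neg_eq_and_inter_neg_eq_singleton_zero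
    (by ext y; simp [S]) ⟨zero_mem L, by simp⟩
  have hRL (y) (hy : y ∈ R) : y ∈ L := (hRS hy).1
  have hone (y) (hy : y ∈ L) (hy0 : y ≠ 0) : 1 ≤ ‖y‖ ^ 2 :=
    one_le_norm_sq_of_inner_self_eq_int (hint y hy y hy).choose_spec hy0
  have hadd (y) (hy : y ∈ R) (z) (hz : z ∈ R) (hyz : y ≠ z) : y + z ≠ 0 := fun h => by
    obtain rfl : z = -y := add_eq_zero_iff_eq_neg'.mp h
    obtain rfl : y = 0 := hR0.subset ⟨hy, Set.mem_neg.mpr hz⟩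
    simp at hyz
  obtain ⟨hRfin, hRcard⟩ := finite_and_ncard_le_choose_of_integral k R (fun y hy => (hRS hy).2)
    (fun y hy z hz => hint y (hRL y hy) z (hRL z hz))
    (fun y hy z hz hyz => hone _ (sub_mem (hRL y hy) (hRL z hz)) (sub_ne_zero.mpr hyz))
    (fun y hy z hz hyz => hone _ (add_mem (hRL y hy) (hRL z hz)) (hadd y hy z hz hyz))
  refine ⟨hRS' ▸ hRfin.union hRfin.neg, ?_⟩
  have hcount := hRS' ▸ Set.ncard_union_neg_add_one hRfin hR0
  have hchoose : (n + (2 * k - 1)).choose (2 * k - 1) = (n + 2 * k - 1).choose (2 * k - 1) := by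
    rcases Nat.eq_zero_or_pos k with rfl | hk
    · simp
    · rw [Nat.add_sub_assoc (by omega)]
  omega

/-- **Reverse Minkowski for integral lattices, ball version.**
For any integral lattice `L ⊂ ℝ^n` (a discrete additive subgroup all of whose pairwise
inner products are integers) and any positive integer `k`, the set of lattice vectors of
squared norm at most `k` is finite, of cardinality at most
`2 * (n + 2k - 1).choose (2k - 1) - 1`. -/
theorem integral_lattice_ball_count (n k : ℕ) (hk : 0 < k)
    (L : AddSubgroup (EuclideanSpace ℝ (Fin n)))
    (hdisc : DiscreteTopology L)
    (hint : ∀ x ∈ L, ∀ y ∈ L, ∃ m : ℤ, (inner ℝ x y : ℝ) = (m : ℝ)) :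
    {y : EuclideanSpace ℝ (Fin n) | y ∈ L ∧ ‖y‖ ^ 2 ≤ (k : ℝ)}.Finite ∧
      {y : EuclideanSpace ℝ (Fin n) | y ∈ L ∧ ‖y‖ ^ 2 ≤ (k : ℝ)}.ncard ≤
        2 * Nat.choose (n + 2 * k - 1) (2 * k - 1) - 1 :=
  integral_lattice_ball_count_general n k L hint
end

section
/- There exists a universal constant C > 0 such that for every positive integer n and every integral lattice L ⊂ ℝ^n, the Gaussian mass ∑_{y ∈ L} exp(−τ* · ‖y‖²) with τ* := 2·log(2n) satisfies ∑_{y ∈ L} exp(−τ* ‖y‖²) ≤ 1 + C/n (in particular the sum converges). -/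
/-!
If `u ≠ ±w` have the same squared norm `k` and an integral inner product, then `|⟪u, w⟫| < k`.
So for `u` running over one half of the shell `‖u‖² = k` of an integral set, the polynomials
`P_u x = ⟪u, x⟫ ∏_{1 ≤ t < k} (k ⟪u, x⟫² - t² ‖x‖²)`, homogeneous of degree `2k - 1`, satisfy
`P_u u ≠ 0 = P_u w` for `w ≠ u`. They are therefore linearly independent in the span of
products of `2k - 1` linear functions, of dimension at most `n ^ (2k - 1)`, and the whole shell
has at most `2 n ^ (2k - 1)` points. As `exp (-τ* k) = (2n) ^ (-2k)`, the shell contributes at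
most `(2 / n) 4 ^ (-k)` to the Gaussian mass, and summing over `k ≥ 1` gives `1 + O(1/n)`.
-/

open Finset Module
open scoped RealInnerProductSpace Pointwise

namespace Submodule

theorem prod_mem_pow {R A ι : Type*} [CommSemiring R] [CommSemiring A] [Algebra R A]
    (M : Submodule R A) (s : Finset ι) {f : ι → A}
    (hf : ∀ i ∈ s, f i ∈ M) : ∏ i ∈ s, f i ∈ M ^ s.card := by
  classical
  induction s using Finset.induction_on with
  | empty => simpa using (one_le (P := (1 : Submodule R A))).mp le_rfl
  | insert a s ha ih =>
    rw [prod_insert ha, card_insert_of_notMem ha, pow_succ']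
    exact mul_mem_mul (hf a (mem_insert_self a s))
      (ih fun i hi => hf i (mem_insert_of_mem hi))

theorem finrank_pow_le {K A : Type*} [Field K] [Ring A] [Algebra K A]
    (M : Submodule K A) [FiniteDimensional K M] (j : ℕ) :
    finrank K ↥(M ^ j) ≤ finrank K M ^ j := by
  classical
  let F : Finset A := univ.image fun i => M.subtype (Module.finBasis K M i)
  have hF : span K (F : Set A) = M := by
    rw [coe_image, coe_univ, Set.image_univ, Set.range_comp' M.subtype, span_image,
      Basis.span_eq, map_subtype_top]
  calc
    finrank K ↥(M ^ j) = finrank K (span K ((F ^ j : Finset A) : Set A)) := by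
      rw [Finset.coe_pow, ← span_pow, hF]
    _ ≤ (F ^ j).card := finrank_span_finset_le_card _
    _ ≤ F.card ^ j := card_pow_le
    _ ≤ finrank K M ^ j := by
      gcongr
      exact card_image_le.trans_eq (by simp)

instance finiteDimensional_pow {K A : Type*} [Field K] [Ring A] [Algebra K A]
    (M : Submodule K A) [FiniteDimensional K M] (j : ℕ) : FiniteDimensional K ↥(M ^ j) :=
  Module.Finite.iff_fg.mpr ((Module.Finite.iff_fg.mp ‹_›).pow j)

end Submodule

theorem Finset.card_le_finrank_of_apply_eq_zero_of_ne {K α : Type*} [Field K]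
    {W : Submodule K (α → K)} [FiniteDimensional K W] (S : Finset α) (f : α → α → K)
    (hmem : ∀ u ∈ S, f u ∈ W) (hdiag : ∀ u ∈ S, f u u ≠ 0)
    (hoff : ∀ u ∈ S, ∀ w ∈ S, u ≠ w → f u w = 0) :
    S.card ≤ finrank K W := by
  let g : S → W := fun u => ⟨f u, hmem u u.2⟩
  have hli : LinearIndependent K g := by
    refine LinearIndependent.of_comp W.subtype (linearIndependent_iff'.mpr fun s c hsum i hi => ?_)
    have hi_eval := congrFun hsum i
    simp only [Finset.sum_apply, Pi.smul_apply, smul_eq_mul, Pi.zero_apply, Function.comp_apply,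
      Submodule.subtype_apply, g] at hi_eval
    rw [Finset.sum_eq_single i (fun j _ hji => by
        rw [hoff _ j.2 _ i.2 (Subtype.coe_ne_coe.mpr hji), mul_zero])
      (fun h => absurd hi h)] at hi_eval
    exact (mul_eq_zero.mp hi_eval).resolve_right (hdiag _ i.2)
  simpa using hli.fintype_card_le_finrank

theorem Finset.exists_subset_subset_union_neg {α : Type*} [DecidableEq α] [InvolutiveNeg α]
    (F : Finset α) : ∃ Q ⊆ F, F ⊆ Q ∪ -Q ∧ ∀ u ∈ Q, ∀ w ∈ Q, u = -w → u = w := by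
  induction F using Finset.induction_on with
  | empty => exact ⟨∅, subset_rfl, by simp, by simp⟩
  | insert a F _ ih =>
    obtain ⟨Q, hQF, hFQ, hQ⟩ := ih
    by_cases ha : -a ∈ Q
    · refine ⟨Q, hQF.trans (subset_insert a F), insert_subset ?_ hFQ, hQ⟩
      exact mem_union_right _ (mem_neg'.mpr ha)
    · refine ⟨insert a Q, insert_subset_insert a hQF, ?_, ?_⟩
      · refine insert_subset (mem_union_left _ (mem_insert_self a Q)) (hFQ.trans ?_)
        exact union_subset_union (subset_insert a Q) (neg_subset_neg (subset_insert a Q))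
      · intro u hu w hw huw
        rcases mem_insert.mp hu with rfl | hu' <;> rcases mem_insert.mp hw with rfl | hw'
        · rfl
        · exact absurd (by rwa [huw, neg_neg]) ha
        · exact absurd (huw ▸ hu') ha
        · exact hQ u hu' w hw' huw

section LinearFunctions

variable (K E : Type*) [Field K] [AddCommGroup E] [Module K E]

def linearFunctions : Submodule K (E → K) := LinearMap.range (LinearMap.ltoFun K E K K)

theorem finrank_linearFunctions_le [FiniteDimensional K E] :
    finrank K (linearFunctions K E) ≤ finrank K E :=
  (LinearMap.finrank_range_le _).trans_eq Subspace.dual_finrank_eq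

instance [FiniteDimensional K E] : FiniteDimensional K (linearFunctions K E) :=
  LinearMap.finiteDimensional_range _

end LinearFunctions

section InnerProduct

variable {E : Type*} [NormedAddCommGroup E] [InnerProductSpace ℝ E]

theorem inner_mem_linearFunctions (u : E) : (fun x => ⟪u, x⟫) ∈ linearFunctions ℝ E :=
  ⟨innerₛₗ ℝ u, rfl⟩

theorem norm_sq_mem_linearFunctions_sq [FiniteDimensional ℝ E] :
    (fun x : E => ‖x‖ ^ 2) ∈ linearFunctions ℝ E ^ 2 := by
  let b := stdOrthonormalBasis ℝ E
  have h : (fun x : E => ‖x‖ ^ 2) = ∑ i, (fun x => ⟪b i, x⟫) * fun x => ⟪b i, x⟫ := by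
    ext x
    simp only [Finset.sum_apply, Pi.mul_apply, ← real_inner_self_eq_norm_sq]
    rw [← b.sum_inner_mul_inner x x]
    simp only [real_inner_comm x]
  rw [h, pow_two]
  exact sum_mem fun i _ => Submodule.mul_mem_mul (inner_mem_linearFunctions _)
    (inner_mem_linearFunctions _)

theorem abs_inner_lt_norm_sq {u w : E} (hnorm : ‖u‖ = ‖w‖) (hne : u ≠ w) (hne' : u ≠ -w) :
    |⟪u, w⟫| < ‖u‖ ^ 2 := by
  have hsub : 0 < ‖u - w‖ ^ 2 := by positivity [sub_ne_zero.mpr hne]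
  have hadd : 0 < ‖u + w‖ ^ 2 := by positivity [add_eq_zero_iff_eq_neg.not.mpr hne']
  rw [norm_sub_sq_real, ← hnorm] at hsub
  rw [norm_add_sq_real, ← hnorm] at hadd
  rw [abs_lt]
  constructor <;> linarith

def shellPoly (k : ℕ) (u : E) : E → ℝ :=
  fun x => ⟪u, x⟫ * ∏ t ∈ Ico 1 k, ((k : ℝ) * ⟪u, x⟫ ^ 2 - (t : ℝ) ^ 2 * ‖x‖ ^ 2)

theorem shellPoly_mem_linearFunctions_pow [FiniteDimensional ℝ E] {k : ℕ} (hk : 0 < k) (u : E) :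
    shellPoly k u ∈ linearFunctions ℝ E ^ (2 * k - 1) := by
  have h : shellPoly k u = (fun x => ⟪u, x⟫) * ∏ t ∈ Ico 1 k,
      ((k : ℝ) • (fun x => ⟪u, x⟫) ^ 2 - ((t : ℝ) ^ 2) • fun x : E => ‖x‖ ^ 2) := by
    ext x
    simp [shellPoly, Finset.prod_apply]
  have hdeg : 2 * k - 1 = 1 + 2 * (Ico 1 k).card := by rw [Nat.card_Ico]; omega
  rw [h, hdeg, pow_add, pow_one, pow_mul]
  refine Submodule.mul_mem_mul (inner_mem_linearFunctions u) (Submodule.prod_mem_pow _ _ ?_)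
  exact fun t _ => sub_mem (Submodule.smul_mem _ _ (Submodule.pow_mem_pow _
    (inner_mem_linearFunctions u) 2)) (Submodule.smul_mem _ _ norm_sq_mem_linearFunctions_sq)

theorem shellPoly_self_ne_zero {k : ℕ} (hk : 0 < k) {u : E} (hu : ‖u‖ ^ 2 = k) :
    shellPoly k u u ≠ 0 := by
  rw [shellPoly, real_inner_self_eq_norm_sq, hu]
  refine mul_ne_zero (by positivity) (prod_ne_zero_iff.mpr fun t ht => ?_)
  have htk : (t : ℝ) < k := by exact_mod_cast (mem_Ico.mp ht).2
  have hfactor : (k : ℝ) * k ^ 2 - t ^ 2 * k = k * ((k - t) * (k + t)) := by ring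
  rw [hfactor]
  exact mul_ne_zero (by positivity) (mul_pos (sub_pos.mpr htk) (by positivity)).ne'

theorem shellPoly_eq_zero_of_abs_lt {k : ℕ} {u w : E} (hw : ‖w‖ ^ 2 = k) {m : ℤ} (hm : ⟪u, w⟫ = m)
    (hmk : |m| < k) : shellPoly k u w = 0 := by
  rw [shellPoly, hm, hw]
  rcases eq_or_ne m 0 with rfl | hm0
  · simp
  refine mul_eq_zero_of_right _ (prod_eq_zero (i := m.natAbs) ?_ ?_)
  · rw [Int.abs_eq_natAbs] at hmk
    rw [mem_Ico]
    omega
  · have : ((m.natAbs : ℕ) : ℝ) ^ 2 = (m : ℝ) ^ 2 := by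
      rw [Nat.cast_natAbs, Int.cast_abs, sq_abs]
    rw [this]; ring

theorem norm_sq_eq_natFloor_of_inner_self_int {y : E} (hy : ∃ m : ℤ, ⟪y, y⟫ = m) :
    ‖y‖ ^ 2 = ⌊‖y‖ ^ 2⌋₊ := by
  obtain ⟨m, hm⟩ := hy
  rw [← real_inner_self_eq_norm_sq, hm]
  lift m to ℕ using (by exact_mod_cast hm ▸ real_inner_self_nonneg)
  simp

end InnerProduct

section Shells

open Real

theorem Real.exp_neg_two_log_two_mul_mul_natCast {n : ℝ} (hn : 0 < n) (k : ℕ) :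
    exp (-(2 * log (2 * n)) * k) = (4 * n ^ 2)⁻¹ ^ k := by
  rw [mul_comm, exp_nat_mul, exp_neg, two_mul, exp_add, exp_log (by positivity)]
  ring

variable {E : Type*} [NormedAddCommGroup E] [InnerProductSpace ℝ E] [FiniteDimensional ℝ E]

theorem card_le_finrank_pow_of_inner_int {k : ℕ} (hk : 0 < k) (S : Finset E)
    (hnorm : ∀ u ∈ S, ‖u‖ ^ 2 = k) (hint : ∀ u ∈ S, ∀ w ∈ S, ∃ m : ℤ, ⟪u, w⟫ = m)
    (hanti : ∀ u ∈ S, ∀ w ∈ S, u = -w → u = w) :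
    S.card ≤ finrank ℝ E ^ (2 * k - 1) := by
  have hoff : ∀ u ∈ S, ∀ w ∈ S, u ≠ w → shellPoly k u w = 0 := by
    intro u hu w hw huw
    obtain ⟨m, hm⟩ := hint u hu w hw
    refine shellPoly_eq_zero_of_abs_lt (hnorm w hw) hm ?_
    have hnorm_eq : ‖u‖ = ‖w‖ := by
      rw [← sq_eq_sq₀ (norm_nonneg u) (norm_nonneg w), hnorm u hu, hnorm w hw]
    have hlt := abs_inner_lt_norm_sq hnorm_eq huw fun h => huw (hanti u hu w hw h)
    rw [hm, hnorm u hu] at hlt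
    exact_mod_cast hlt
  calc
    S.card ≤ finrank ℝ ↥(linearFunctions ℝ E ^ (2 * k - 1)) :=
      S.card_le_finrank_of_apply_eq_zero_of_ne (shellPoly k)
        (fun u _ => shellPoly_mem_linearFunctions_pow hk u)
        (fun u hu => shellPoly_self_ne_zero hk (hnorm u hu)) hoff
    _ ≤ finrank ℝ (linearFunctions ℝ E) ^ (2 * k - 1) := Submodule.finrank_pow_le _ _
    _ ≤ finrank ℝ E ^ (2 * k - 1) := Nat.pow_le_pow_left (finrank_linearFunctions_le ℝ E) _

theorem card_le_two_mul_finrank_pow_of_inner_int {k : ℕ} (hk : 0 < k) (S : Finset E)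
    (hnorm : ∀ u ∈ S, ‖u‖ ^ 2 = k) (hint : ∀ u ∈ S, ∀ w ∈ S, ∃ m : ℤ, ⟪u, w⟫ = m) :
    S.card ≤ 2 * finrank ℝ E ^ (2 * k - 1) := by
  classical
  obtain ⟨Q, hQS, hSQ, hanti⟩ := S.exists_subset_subset_union_neg
  have hQ := card_le_finrank_pow_of_inner_int hk Q (fun u hu => hnorm u (hQS hu))
    (fun u hu w hw => hint u (hQS hu) w (hQS hw)) hanti
  calc
    S.card ≤ (Q ∪ -Q).card := card_le_card hSQ
    _ ≤ Q.card + (-Q).card := card_union_le _ _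
    _ ≤ 2 * finrank ℝ E ^ (2 * k - 1) := by rw [card_neg]; omega

theorem sum_exp_neg_two_log_mul_norm_sq_le_of_norm_sq_eq (hn : 0 < finrank ℝ E) {k : ℕ}
    (hk : 0 < k) (S : Finset E) (hnorm : ∀ u ∈ S, ‖u‖ ^ 2 = k)
    (hint : ∀ u ∈ S, ∀ w ∈ S, ∃ m : ℤ, ⟪u, w⟫ = m) :
    ∑ y ∈ S, exp (-(2 * log (2 * finrank ℝ E)) * ‖y‖ ^ 2) ≤ 2 / finrank ℝ E * (1 / 4) ^ k := by
  set n := finrank ℝ E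
  have hn' : (0 : ℝ) < n := by exact_mod_cast hn
  rw [sum_congr rfl fun y hy => by rw [hnorm y hy, exp_neg_two_log_two_mul_mul_natCast hn'],
    sum_const, nsmul_eq_mul]
  have hpow : (n : ℝ) ^ (2 * k - 1) * n = (n ^ 2) ^ k := by
    rw [← pow_succ, ← pow_mul, Nat.sub_add_cancel (by omega)]
  calc
    (S.card : ℝ) * (4 * n ^ 2 : ℝ)⁻¹ ^ k ≤ 2 * n ^ (2 * k - 1) * (4 * n ^ 2 : ℝ)⁻¹ ^ k := by
      gcongr
      exact_mod_cast card_le_two_mul_finrank_pow_of_inner_int hk S hnorm hint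
    _ = 2 / n * (1 / 4) ^ k := by
      rw [inv_pow, mul_pow, ← hpow, one_div, inv_pow]
      field_simp

theorem sum_exp_neg_two_log_mul_norm_sq_le (hn : 0 < finrank ℝ E) (G : Finset E)
    (hint : ∀ x ∈ G, ∀ y ∈ G, ∃ m : ℤ, ⟪x, y⟫ = m) :
    ∑ y ∈ G, exp (-(2 * log (2 * finrank ℝ E)) * ‖y‖ ^ 2) ≤ 1 + 3 / finrank ℝ E := by
  classical
  set n := finrank ℝ E
  set f : E → ℝ := fun y => exp (-(2 * log (2 * n)) * ‖y‖ ^ 2)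
  set G' := G.erase 0
  have hint' : ∀ x ∈ G', ∀ y ∈ G', ∃ m : ℤ, ⟪x, y⟫ = m := fun x hx y hy =>
    hint x (mem_of_mem_erase hx) y (mem_of_mem_erase hy)
  let N : E → ℕ := fun y => ⌊‖y‖ ^ 2⌋₊
  have hN : ∀ y ∈ G', ‖y‖ ^ 2 = N y := fun y hy =>
    norm_sq_eq_natFloor_of_inner_self_int (hint' y hy y hy)
  have hshell : ∀ k ∈ G'.image N, ∑ y ∈ G' with N y = k, f y ≤ 2 / n * (1 / 4) ^ k := by
    intro k hk
    obtain ⟨y, hy, rfl⟩ := mem_image.mp hk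
    have hNy : (0 : ℝ) < N y := hN y hy ▸ pow_pos (norm_pos_iff.mpr (ne_of_mem_erase hy)) 2
    refine sum_exp_neg_two_log_mul_norm_sq_le_of_norm_sq_eq hn (by exact_mod_cast hNy) _
      (fun u hu => (mem_filter.mp hu).2 ▸ hN u (mem_filter.mp hu).1)
      (fun u hu w hw => hint' u (mem_filter.mp hu).1 w (mem_filter.mp hw).1)
  have hgeom : ∑ k ∈ G'.image N, (1 / 4 : ℝ) ^ k ≤ 4 / 3 := by
    refine ((summable_geometric_of_lt_one (by norm_num) (by norm_num)).sum_le_tsum _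
      (fun _ _ => by positivity)).trans_eq ?_
    rw [tsum_geometric_of_lt_one (by norm_num) (by norm_num)]
    norm_num
  calc
    ∑ y ∈ G, f y ≤ ∑ y ∈ insert 0 G', f y :=
      sum_le_sum_of_subset_of_nonneg (insert_erase_subset 0 G) fun _ _ _ => (exp_pos _).le
    _ = 1 + ∑ k ∈ G'.image N, ∑ y ∈ G' with N y = k, f y := by
      rw [sum_insert (notMem_erase 0 G), sum_fiberwise_of_maps_to fun y hy => mem_image_of_mem N hy]
      congr 1
      simp [f]
    _ ≤ 1 + 2 / n * (4 / 3) := by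
      grw [sum_le_sum hshell, ← mul_sum, hgeom]
    _ ≤ 1 + 3 / n := by
      gcongr
      rw [div_mul_eq_mul_div]
      gcongr
      norm_num

end Shells

/-- There is a universal constant `C > 0` such that for every integral lattice
`L ⊂ ℝ^n`, the Gaussian mass at parameter `τ* = 2 log (2n)` converges and satisfies
`∑_{y ∈ L} exp(-τ* ‖y‖²) ≤ 1 + C/n`. -/
theorem integral_lattice_gaussian_mass :
    ∃ C : ℝ, 0 < C ∧
      ∀ n : ℕ, 0 < n →
        ∀ L : AddSubgroup (EuclideanSpace ℝ (Fin n)),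
          DiscreteTopology L →
          (∀ x ∈ L, ∀ y ∈ L, ∃ m : ℤ, (inner ℝ x y : ℝ) = (m : ℝ)) →
          Summable (fun y : L =>
              Real.exp (-(2 * Real.log (2 * n)) * ‖(y : EuclideanSpace ℝ (Fin n))‖ ^ 2)) ∧
          (∑' y : L, Real.exp (-(2 * Real.log (2 * n)) * ‖(y : EuclideanSpace ℝ (Fin n))‖ ^ 2))
            ≤ 1 + C / n := by
  refine ⟨3, by norm_num, fun n hn L _ hint => ?_⟩
  set φ : L → ℝ := fun y =>
    Real.exp (-(2 * Real.log (2 * n)) * ‖(y : EuclideanSpace ℝ (Fin n))‖ ^ 2)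
  have hfinrank : finrank ℝ (EuclideanSpace ℝ (Fin n)) = n := finrank_euclideanSpace_fin
  have hpartial : ∀ G : Finset L, ∑ y ∈ G, φ y ≤ 1 + 3 / n := by
    intro G
    have h := sum_exp_neg_two_log_mul_norm_sq_le (by rwa [hfinrank])
      (G.map (Function.Embedding.subtype _)) (by simpa using fun x hx _ y hy _ => hint x hx y hy)
    rwa [sum_map, hfinrank] at h
  have hnonneg : 0 ≤ φ := fun _ => (Real.exp_pos _).le
  exact ⟨summable_of_sum_le hnonneg hpartial, Real.tsum_le_of_sum_le hnonneg hpartial⟩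
end

section
/- For all positive integers n and k, 1 + 2·∑_{j=1}^{k} binomial(n + 2j − 2, 2j − 1) ≤ 2·binomial(n + 2k − 1, 2k − 1) − 1. -/
/-- For all positive integers `n` and `k`,
`1 + 2 ∑_{j=1}^{k} (n + 2j - 2).choose (2j - 1) ≤ 2 * (n + 2k - 1).choose (2k - 1) - 1`. -/
theorem sum_choose_ball_bound (n k : ℕ) (hn : 0 < n) (hk : 0 < k) :
    1 + 2 * ∑ j ∈ Finset.Icc 1 k, Nat.choose (n + 2 * j - 2) (2 * j - 1) ≤
      2 * Nat.choose (n + 2 * k - 1) (2 * k - 1) - 1 := by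
  induction k, hk using Nat.le_induction with
  | base =>
    simp [Nat.choose_one_right, show n + 2 * 1 - 2 = n by omega,
      show n + 2 * 1 - 1 = n + 1 by omega]
    omega
  | succ k hk ih =>
    rw [Finset.sum_Icc_succ_top (by omega : 1 ≤ k + 1)]
    have hA : 1 ≤ Nat.choose (n + 2 * k - 1) (2 * k - 1) :=
      Nat.choose_pos (by omega)
    -- Pascal: C(n+2k+1, 2k+1) = C(n+2k, 2k) + C(n+2k, 2k+1)
    have hP : Nat.choose (n + 2 * (k + 1) - 1) (2 * (k + 1) - 1) =
        Nat.choose (n + 2 * k) (2 * k) + Nat.choose (n + 2 * k) (2 * k + 1) := by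
      rw [show n + 2 * (k + 1) - 1 = (n + 2 * k) + 1 by omega,
        show 2 * (k + 1) - 1 = 2 * k + 1 by omega]
      exact Nat.choose_succ_succ' (n + 2 * k) (2 * k)
    -- C(n+2k, 2k) ≥ C(n+2k-1, 2k-1)
    have hM : Nat.choose (n + 2 * k - 1) (2 * k - 1) ≤ Nat.choose (n + 2 * k) (2 * k) := by
      rw [show n + 2 * k = (n + 2 * k - 1) + 1 by omega,
        show 2 * k = (2 * k - 1) + 1 by omega, Nat.choose_succ_succ']
      exact Nat.le_add_right _ _
    have hT : n + 2 * (k + 1) - 2 = n + 2 * k := by omega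
    have hT2 : 2 * (k + 1) - 1 = 2 * k + 1 := by omega
    rw [hT2] at hP ⊢
    rw [hT]
    omega
end

section
/- Let A ⊂ (0,1) be a finite set of reals and let v₁, …, v_m ∈ ℝ^n be distinct unit vectors such that |⟨v_i, v_j⟩| ∈ A ∪ {0, 1} for all i, j. Then m ≤ 2 · binomial(n + 2|A|, 2|A| + 1). -/
/-!
For a unit vector `w`, the polynomial `f_w(x) = ⟨w, x⟩ ∏_{a ∈ A} (⟨w, x⟩² - a² ‖x‖²)` is
homogeneous of degree `2|A| + 1`, does not vanish at `w`, and vanishes at every unit vector `x`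
with `|⟨w, x⟩| ∈ A ∪ {0}`. Keeping one vector of each antipodal pair `±v_i`, the remaining
`f_{v_i}` are therefore linearly independent, so their number is at most the dimension
`binomial(n + 2|A|, 2|A| + 1)` of the space of such polynomials; the antipodal pairs cost at most
a factor `2`.
-/

open Finset MvPolynomial Module

section SignRepresentatives

variable {ι E : Type*} [Fintype ι] [LinearOrder ι] [InvolutiveNeg E] [DecidableEq E]

def signReps (v : ι → E) : Finset ι := {i | ∀ j, v j = -v i → i ≤ j}

lemma ne_neg_of_mem_signReps {v : ι → E} {i j : ι} (hi : i ∈ signReps v) (hj : j ∈ signReps v)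
    (hij : i ≠ j) : v i ≠ -v j := by
  intro h
  simp only [signReps, mem_filter, mem_univ, true_and] at hi hj
  exact hij (le_antisymm (hi j (by rw [h, neg_neg])) (hj i h))

lemma card_le_two_mul_card_signReps {v : ι → E} (hv : Function.Injective v) :
    Fintype.card ι ≤ 2 * #(signReps v) := by
  have hcompl : #(signReps v)ᶜ ≤ #(signReps v) := by
    refine card_le_card_of_forall_subsingleton (fun i j => v j = -v i) (fun i hi => ?_)
      fun j _ i₁ h₁ i₂ h₂ => hv (neg_injective (h₁.2.symm.trans h₂.2))
    simp only [signReps, mem_compl, mem_filter, mem_univ, true_and, not_forall, not_le] at hi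
    obtain ⟨j, hj, hji⟩ := hi
    refine ⟨j, ?_, hj⟩
    simp only [signReps, mem_filter, mem_univ, true_and]
    intro k hk
    rw [hv (by rw [hk, hj, neg_neg] : v k = v i)]
    exact hji.le
  rw [← card_compl_add_card (signReps v)]
  omega

end SignRepresentatives

namespace MvPolynomial

theorem finrank_homogeneousSubmodule_s15 (σ R : Type*) [Fintype σ] [CommRing R] [Nontrivial R]
    (D : ℕ) :
    finrank R (homogeneousSubmodule σ R D) = (Fintype.card σ + D - 1).choose D := by
  classical
  have hsupp : {d : σ →₀ ℕ | d.degree = D} = ↑(univ.finsuppAntidiag D : Finset (σ →₀ ℕ)) := by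
    ext d
    simp [mem_finsuppAntidiag, Finsupp.degree_eq_sum]
  rw [homogeneousSubmodule_eq_finsupp_supported, ← restrictSupport,
    finrank_eq_nat_card_basis (basisRestrictSupport R _), hsupp, Nat.card_coe_set_eq,
    Set.ncard_coe_finset, card_finsuppAntidiag_nat_eq_choose, card_univ]

instance (σ R : Type*) [Finite σ] [CommRing R] (D : ℕ) :
    Module.Finite R (homogeneousSubmodule σ R D) :=
  Module.Finite.iff_fg.2 (homogeneousSubmodule_fg σ R D)

theorem card_le_finrank_of_eval_ne_zero_iff {σ R ι : Type*} [CommRing R] [IsDomain R]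
    [Fintype ι] {P : Submodule R (MvPolynomial σ R)} [Module.Finite R P]
    (p : ι → MvPolynomial σ R) (hp : ∀ i, p i ∈ P) (x : ι → σ → R)
    (hpx : ∀ i j, eval (x j) (p i) ≠ 0 ↔ i = j) : Fintype.card ι ≤ finrank R P := by
  classical
  let evalAll : MvPolynomial σ R →ₗ[R] ι → R := LinearMap.pi fun j => (aeval (x j)).toLinearMap
  have hli : LinearIndependent R p := by
    refine LinearIndependent.of_comp evalAll ?_
    have : evalAll ∘ p = fun i => Pi.single i (eval (x i) (p i)) := by
      ext i j
      by_cases hij : i = j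
      · subst hij; simp [evalAll]
      · simpa [evalAll, Pi.single_apply, Ne.symm hij] using (hpx i j).not.2 hij
    rw [this]
    exact Pi.linearIndependent_single_of_ne_zero fun i => (hpx i i).2 rfl
  calc Fintype.card ι = finrank R (Submodule.span R (Set.range p)) :=
        (finrank_span_eq_card hli).symm
    _ ≤ finrank R P := Submodule.finrank_mono (Submodule.span_le.2 (Set.range_subset_iff.2 hp))

end MvPolynomial

lemma mul_prod_sq_sub_sq_eq_zero_iff {A : Finset ℝ} (hA : ∀ a ∈ A, 0 ≤ a) (t : ℝ) :
    t * ∏ a ∈ A, (t ^ 2 - a ^ 2) = 0 ↔ |t| ∈ insert 0 A := by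
  simp only [mul_eq_zero, prod_eq_zero_iff, sub_eq_zero, sq_eq_sq_iff_abs_eq_abs, mem_insert,
    abs_eq_zero]
  constructor
  · rintro (h | ⟨a, ha, h⟩)
    · exact Or.inl h
    · exact Or.inr (by rwa [h, abs_of_nonneg (hA a ha)])
  · rintro (h | h)
    · exact Or.inl h
    · exact Or.inr ⟨|t|, h, by rw [abs_abs]⟩

section AngleAnnihilator

variable {σ : Type*} [Fintype σ]

noncomputable def innerForm (w : EuclideanSpace ℝ σ) : MvPolynomial σ ℝ := ∑ k, C (w k) * X k

noncomputable def normSqForm : MvPolynomial σ ℝ := ∑ k, X k ^ 2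

lemma isHomogeneous_innerForm (w : EuclideanSpace ℝ σ) : (innerForm w).IsHomogeneous 1 :=
  IsHomogeneous.sum _ _ _ fun k _ => (isHomogeneous_X ℝ k).C_mul _

lemma isHomogeneous_normSqForm : (normSqForm : MvPolynomial σ ℝ).IsHomogeneous 2 :=
  IsHomogeneous.sum _ _ _ fun k _ => (isHomogeneous_X ℝ k).pow 2

lemma eval_innerForm (w x : EuclideanSpace ℝ σ) : eval x.ofLp (innerForm w) = inner ℝ w x := by
  simp [innerForm, EuclideanSpace.inner_eq_star_dotProduct, dotProduct, mul_comm]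

lemma eval_normSqForm (x : EuclideanSpace ℝ σ) : eval x.ofLp normSqForm = ‖x‖ ^ 2 := by
  simp [normSqForm, EuclideanSpace.norm_sq_eq]

/-- The factor `‖x‖²` makes `f_w` homogeneous without changing it on the unit sphere. -/
noncomputable def angleAnnihilator (A : Finset ℝ) (w : EuclideanSpace ℝ σ) : MvPolynomial σ ℝ :=
  innerForm w * ∏ a ∈ A, (innerForm w ^ 2 - C (a ^ 2) * normSqForm)

lemma isHomogeneous_angleAnnihilator (A : Finset ℝ) (w : EuclideanSpace ℝ σ) :
    (angleAnnihilator A w).IsHomogeneous (2 * #A + 1) := by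
  have hfactor : ∀ a ∈ A, (innerForm w ^ 2 - C (a ^ 2) * normSqForm).IsHomogeneous 2 :=
    fun a _ => ((isHomogeneous_innerForm w).pow 2).sub (isHomogeneous_normSqForm.C_mul _)
  rw [angleAnnihilator, show 2 * #A + 1 = 1 + ∑ _a ∈ A, 2 by rw [sum_const, smul_eq_mul]; ring]
  exact (isHomogeneous_innerForm w).mul (IsHomogeneous.prod A _ _ hfactor)

lemma eval_angleAnnihilator_of_norm_eq_one (A : Finset ℝ) (w : EuclideanSpace ℝ σ)
    {x : EuclideanSpace ℝ σ} (hx : ‖x‖ = 1) :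
    eval x.ofLp (angleAnnihilator A w) = inner ℝ w x * ∏ a ∈ A, (inner ℝ w x ^ 2 - a ^ 2) := by
  simp [angleAnnihilator, eval_innerForm, eval_normSqForm, hx]

lemma eval_angleAnnihilator_eq_zero {A : Finset ℝ} (hA : ∀ a ∈ A, 0 ≤ a) (w : EuclideanSpace ℝ σ)
    {x : EuclideanSpace ℝ σ} (hx : ‖x‖ = 1) (hwx : |inner ℝ w x| ∈ insert 0 A) :
    eval x.ofLp (angleAnnihilator A w) = 0 := by
  rwa [eval_angleAnnihilator_of_norm_eq_one A w hx, mul_prod_sq_sub_sq_eq_zero_iff hA]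

lemma eval_angleAnnihilator_self_ne_zero {A : Finset ℝ} (hA : ∀ a ∈ A, 0 ≤ a) (hA₁ : 1 ∉ A)
    {w : EuclideanSpace ℝ σ} (hw : ‖w‖ = 1) : eval w.ofLp (angleAnnihilator A w) ≠ 0 := by
  rw [eval_angleAnnihilator_of_norm_eq_one A w hw, Ne, mul_prod_sq_sub_sq_eq_zero_iff hA,
    real_inner_self_eq_norm_sq, hw, one_pow, abs_one, mem_insert, not_or]
  exact ⟨one_ne_zero, hA₁⟩

end AngleAnnihilator

lemma eq_or_eq_neg_of_abs_real_inner_eq_one {F : Type*} [NormedAddCommGroup F]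
    [InnerProductSpace ℝ F] {x y : F} (hx : ‖x‖ = 1) (hy : ‖y‖ = 1)
    (h : |inner ℝ x y| = 1) : x = y ∨ x = -y := by
  rcases (abs_eq zero_le_one).1 h with h | h
  · exact .inl ((inner_eq_one_iff_of_norm_eq_one hx hy).1 h)
  · exact .inr ((inner_eq_neg_one_iff_of_norm_eq_one hx hy).1 h)

/-- **Delsarte–Goethals–Seidel bound.** If `v₁, …, v_m ∈ ℝ^n` are distinct unit vectors
whose pairwise inner products satisfy `|⟨v_i, v_j⟩| ∈ A ∪ {0, 1}` for a finite set
`A ⊂ (0, 1)`, then `m ≤ 2 * (n + 2|A|).choose (2|A| + 1)`. -/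
theorem delsarte_goethals_seidel (n m : ℕ) (A : Finset ℝ) (hA : ↑A ⊆ Set.Ioo (0 : ℝ) 1)
    (v : Fin m → EuclideanSpace ℝ (Fin n)) (hv : Function.Injective v)
    (hunit : ∀ i, ‖v i‖ = 1)
    (hangles : ∀ i j, |(inner ℝ (v i) (v j) : ℝ)| ∈ (A : Set ℝ) ∪ {0, 1}) :
    m ≤ 2 * Nat.choose (n + 2 * A.card) (2 * A.card + 1) := by
  classical
  set S := signReps v
  have hA₀ : ∀ a ∈ A, 0 ≤ a := fun a ha => (hA ha).1.le
  have hA₁ : (1 : ℝ) ∉ A := fun h => (hA h).2.false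
  have hdiag : ∀ i j : S, eval (v j).ofLp (angleAnnihilator A (v i)) ≠ 0 ↔ i = j := by
    refine fun i j => ⟨fun hne => ?_, fun hij =>
      hij ▸ eval_angleAnnihilator_self_ne_zero hA₀ hA₁ (hunit i)⟩
    by_contra hij
    refine hne (eval_angleAnnihilator_eq_zero hA₀ _ (hunit j) ?_)
    rcases hangles i j with hmem | hzero | hone
    · exact mem_insert_of_mem hmem
    · exact mem_insert.2 (.inl hzero)
    · rcases eq_or_eq_neg_of_abs_real_inner_eq_one (hunit i) (hunit j) hone with h | h
      · exact absurd (Subtype.ext (hv h)) hij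
      · exact absurd h (ne_neg_of_mem_signReps i.2 j.2 (Subtype.coe_ne_coe.2 hij))
  calc m = Fintype.card (Fin m) := (Fintype.card_fin m).symm
    _ ≤ 2 * #S := card_le_two_mul_card_signReps hv
    _ ≤ 2 * finrank ℝ (homogeneousSubmodule (Fin n) ℝ (2 * #A + 1)) := by
      gcongr
      simpa using card_le_finrank_of_eval_ne_zero_iff (fun i : S => angleAnnihilator A (v i))
        (fun i => isHomogeneous_angleAnnihilator A (v i)) (fun j => (v j).ofLp) hdiag
    _ = 2 * Nat.choose (n + 2 * A.card) (2 * A.card + 1) := by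
      rw [finrank_homogeneousSubmodule_s15, Fintype.card_fin, ← add_assoc, Nat.add_sub_cancel]
end

section
/- Define f : ℕ → ℕ by f(7) = 126, f(n) = 240 + 2(n−8)² for 8 ≤ n ≤ 11, and f(n) = 2n² otherwise. Then f is superadditive: f(n₁ + n₂) ≥ f(n₁) + f(n₂) for all positive integers n₁, n₂. -/
/-- The bound function: `f 7 = 126`, `f n = 240 + 2(n-8)²` for `8 ≤ n ≤ 11`,
and `f n = 2n²` otherwise. -/
def rootBound (n : ℕ) : ℕ :=
  if n = 7 then 126
  else if 8 ≤ n ∧ n ≤ 11 then 240 + 2 * (n - 8) ^ 2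
  else 2 * n ^ 2

lemma rootBound_ub (n : ℕ) : rootBound n ≤ 2 * n ^ 2 + 48 * n := by
  rcases le_or_gt n 11 with h | h
  · interval_cases n <;> decide
  · rw [rootBound, if_neg (by omega), if_neg (by omega)]
    omega

lemma rootBound_big {n : ℕ} (h : 12 ≤ n) : rootBound n = 2 * n ^ 2 := by
  rw [rootBound, if_neg (by omega), if_neg (by omega)]

/-- `rootBound` is superadditive on positive integers. -/
theorem rootBound_superadditive (n₁ n₂ : ℕ) (h₁ : 0 < n₁) (h₂ : 0 < n₂) :
    rootBound n₁ + rootBound n₂ ≤ rootBound (n₁ + n₂) := by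
  rcases le_or_gt n₁ 11 with a | a <;> rcases le_or_gt n₂ 11 with b | b
  · interval_cases n₁ <;> interval_cases n₂ <;> decide
  · have h3 := rootBound_ub n₁
    rw [rootBound_big (show 12 ≤ n₁ + n₂ by omega), rootBound_big (show 12 ≤ n₂ by omega)]
    nlinarith
  · have h3 := rootBound_ub n₂
    rw [rootBound_big (show 12 ≤ n₁ + n₂ by omega), rootBound_big (show 12 ≤ n₁ by omega)]
    nlinarith
  · rw [rootBound_big (by omega), rootBound_big (by omega), rootBound_big (by omega)]
    nlinarith
end
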